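/- arXiv:1508.01892 — 2 statements merged into one kernel-verified Lean document; each statement's English description precedes it below -/
import Mathlib

section
/- Let X, W, U be mutually independent random variables, where X is Gamma(m_X, β_X)-distributed, W is Gamma(m_W, β_W)-distributed, and U is Gamma(m_U, β_U)-distributed for positive integers m_X, m_W, m_U and positive rates β_X, β_W, β_U. Then for all a, b > 0, P( X·W > a and X·U > b ) = (β_X^{m_X} / Γ(m_X)) · Σ_{i=0}^{m_W−1} Σ_{j=0}^{m_U−1} ((β_W a)^i / i!) · ((β_U b)^j / j!) · ∫_0^∞ y^{m_X−i−j−1} · exp( −(β_W a + β_U b)/y − β_X y ) dy. -/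
/-!
For `x > 0` the event `{X W > a, X U > b}` is `{W > a / x} ∩ {U > b / x}`, so by independence its
probability is `∫ P(W > a / x) P(U > b / x) dP_X(x)`. For integer shape `m` the Gamma tail is the
Erlang formula `P(Gamma(m, β) > t) = e^{-β t} ∑_{i < m} (β t)^i / i!`, whose derivative telescopes
to minus the density. Multiplying the two tails at `t = a / x, b / x` by the density of `X` and
expanding the product gives one integrand `x^{m_X - i - j - 1} e^{-(β_W a + β_U b) / x - β_X x}`
per pair `(i, j)`.
-/

open MeasureTheory ProbabilityTheory Real
open Set Filter Finset Topology
open scoped ENNReal Nat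

/-- `P(Poisson(β t) < m)`. -/
noncomputable def erlangTail (m : ℕ) (β t : ℝ) : ℝ :=
  exp (-(β * t)) * ∑ i ∈ range m, (β * t) ^ i / i !

lemma hasDerivAt_erlangTail_succ (n : ℕ) (β x : ℝ) :
    HasDerivAt (erlangTail (n + 1) β) (-(β ^ (n + 1) * x ^ n / n ! * exp (-(β * x)))) x := by
  have hexp : HasDerivAt (fun t => exp (-(β * t))) (-β * exp (-(β * x))) x := by
    simpa [mul_comm] using ((hasDerivAt_id x).const_mul β).neg.exp
  induction n with
  | zero =>
    refine (hexp.congr_deriv (by simp)).congr_of_eventuallyEq (Eventually.of_forall fun t => ?_)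
    simp [erlangTail]
  | succ n ih =>
    -- the derivative of the new summand cancels the leading term of `ih`
    have hsplit : erlangTail (n + 2) β =
        fun t => erlangTail (n + 1) β t + exp (-(β * t)) * ((β * t) ^ (n + 1) / (n + 1)!) := by
      funext t
      simp only [erlangTail, sum_range_succ _ (n + 1), mul_add]
    have hpow : HasDerivAt (fun t => (β * t) ^ (n + 1) / (n + 1)!)
        ((n + 1) * (β * x) ^ n * β / (n + 1)!) x := by
      simpa using (((hasDerivAt_id x).const_mul β).pow (n + 1)).div_const ((n + 1)! : ℝ)
    rw [hsplit]
    refine (ih.add (hexp.mul hpow)).congr_deriv ?_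
    rw [Nat.factorial_succ]
    push_cast
    field_simp
    ring

lemma tendsto_erlangTail_atTop (m : ℕ) {β : ℝ} (hβ : 0 < β) :
    Tendsto (erlangTail m β) atTop (𝓝 0) := by
  have hterm (i : ℕ) : Tendsto (fun t => (β * t) ^ i * exp (-(β * t)) / i !) atTop (𝓝 0) := by
    simpa using ((tendsto_pow_mul_exp_neg_atTop_nhds_zero i).comp
      (tendsto_id.const_mul_atTop hβ)).div_const (i ! : ℝ)
  have := tendsto_finsetSum (range m) fun i _ => hterm i
  simp only [sum_const_zero] at this
  refine this.congr fun t => ?_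
  simp only [erlangTail, mul_sum]
  exact sum_congr rfl fun i _ => by ring

lemma erlangTail_nonneg (m : ℕ) {β t : ℝ} (hβ : 0 ≤ β) (ht : 0 ≤ t) : 0 ≤ erlangTail m β t := by
  unfold erlangTail
  positivity

lemma continuous_erlangTail (m : ℕ) (β : ℝ) : Continuous (erlangTail m β) := by
  unfold erlangTail
  fun_prop

lemma gammaPDFReal_natCast_succ (n : ℕ) (β : ℝ) {x : ℝ} (hx : 0 ≤ x) :
    gammaPDFReal (n + 1 : ℕ) β x = β ^ (n + 1) * x ^ n / n ! * exp (-(β * x)) := by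
  rw [gammaPDFReal, if_pos hx, Nat.cast_succ, Gamma_nat_eq_factorial, add_sub_cancel_right,
    rpow_natCast, ← Nat.cast_succ, rpow_natCast, pow_succ]
  ring

lemma gammaMeasure_Ioi {m : ℕ} (hm : 0 < m) {β : ℝ} (hβ : 0 < β) {t : ℝ} (ht : 0 ≤ t) :
    gammaMeasure m β (Ioi t) = ENNReal.ofReal (erlangTail m β t) := by
  obtain ⟨n, rfl⟩ : ∃ n, m = n + 1 := ⟨m - 1, by omega⟩
  have hderiv (x : ℝ) (hx : x ∈ Ioi t) :
      HasDerivAt (fun y => -erlangTail (n + 1) β y) (gammaPDFReal (n + 1 : ℕ) β x) x := by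
    rw [gammaPDFReal_natCast_succ n β (ht.trans hx.out.le)]
    exact (hasDerivAt_erlangTail_succ n β x).neg.congr_deriv (neg_neg _)
  have hcont : ContinuousWithinAt (fun y => -erlangTail (n + 1) β y) (Ici t) t :=
    (continuous_erlangTail _ β).neg.continuousWithinAt
  have hnonneg (x : ℝ) (_ : x ∈ Ioi t) : 0 ≤ gammaPDFReal (n + 1 : ℕ) β x :=
    gammaPDFReal_nonneg (by positivity) hβ x
  have htend := (tendsto_erlangTail_atTop (n + 1) hβ).neg
  rw [neg_zero] at htend
  rw [gammaMeasure, withDensity_apply _ measurableSet_Ioi]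
  unfold gammaPDF
  rw [← ofReal_integral_eq_lintegral_ofReal
      (integrableOn_Ioi_deriv_of_nonneg hcont hderiv hnonneg htend)
      ((ae_restrict_iff' measurableSet_Ioi).2 (ae_of_all _ hnonneg)),
    integral_Ioi_of_hasDerivAt_of_nonneg hcont hderiv hnonneg htend, zero_sub, neg_neg]

lemma ae_pos_gammaMeasure (s β : ℝ) : ∀ᵐ x ∂gammaMeasure s β, 0 < x := by
  have hpdf : Measurable (gammaPDF s β) := (measurable_gammaPDFReal s β).ennreal_ofReal
  rw [gammaMeasure, ae_withDensity_iff hpdf]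
  filter_upwards [Measure.ae_ne volume 0] with x hx0 hx
  exact hx0.lt_or_gt.resolve_left fun hneg => hx (gammaPDF_of_neg hneg)

section Independent

variable {Ω : Type*} [MeasurableSpace Ω] {P : Measure Ω} [IsFiniteMeasure P] {X W U : Ω → ℝ}

lemma map_prodMk_prodMk_eq_prod (hX : Measurable X) (hW : Measurable W)
    (hU : Measurable U) (hInd : iIndepFun ![X, W, U] P) :
    P.map (fun ω => (X ω, W ω, U ω)) = (P.map X).prod ((P.map W).prod (P.map U)) := by
  have hmeas : ∀ i, Measurable (![X, W, U] i) := fun i => by fin_cases i <;> assumption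
  have hWU : IndepFun W U P := by
    simpa using hInd.indepFun (show (1 : Fin 3) ≠ 2 by decide)
  have hXWU : IndepFun X (fun ω => (W ω, U ω)) P := by
    simpa using (hInd.indepFun_prodMk hmeas 1 2 0 (by decide) (by decide)).symm
  rw [(indepFun_iff_map_prod_eq_prod_map_map hX.aemeasurable (hW.prodMk hU).aemeasurable).1 hXWU,
    (indepFun_iff_map_prod_eq_prod_map_map hW.aemeasurable hU.aemeasurable).1 hWU]

lemma measure_lt_mul_and_lt_mul_eq_lintegral (hX : Measurable X) (hW : Measurable W)
    (hU : Measurable U) (hInd : iIndepFun ![X, W, U] P) (hXpos : ∀ᵐ x ∂P.map X, 0 < x)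
    (a b : ℝ) :
    P {ω | a < X ω * W ω ∧ b < X ω * U ω} =
      ∫⁻ x, P.map W (Ioi (a / x)) * P.map U (Ioi (b / x)) ∂P.map X := by
  set S : Set (ℝ × ℝ × ℝ) := {p | a < p.1 * p.2.1 ∧ b < p.1 * p.2.2}
  have hS : MeasurableSet S :=
    (measurableSet_lt measurable_const (measurable_fst.mul measurable_snd.fst)).inter
      (measurableSet_lt measurable_const (measurable_fst.mul measurable_snd.snd))
  have hslice (x : ℝ) (hx : 0 < x) : Prod.mk x ⁻¹' S = Ioi (a / x) ×ˢ Ioi (b / x) := by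
    ext q
    simp [S, div_lt_iff₀' hx]
  calc P {ω | a < X ω * W ω ∧ b < X ω * U ω}
      = P.map (fun ω => (X ω, W ω, U ω)) S :=
        (Measure.map_apply (hX.prodMk (hW.prodMk hU)) hS).symm
    _ = ∫⁻ x, (P.map W).prod (P.map U) (Prod.mk x ⁻¹' S) ∂P.map X := by
        rw [map_prodMk_prodMk_eq_prod hX hW hU hInd, Measure.prod_apply hS]
    _ = _ := lintegral_congr_ae <| hXpos.mono fun x hx => by
        simp only [hslice x hx, Measure.prod_prod]

end Independent

lemma gammaPDFReal_mul_erlangTail_mul_erlangTail (s βX βW βU a b : ℝ) (mW mU : ℕ) {x : ℝ}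
    (hx : 0 < x) :
    gammaPDFReal s βX x * (erlangTail mW βW (a / x) * erlangTail mU βU (b / x)) =
      ∑ i ∈ range mW, ∑ j ∈ range mU,
        βX ^ s / Gamma s * ((βW * a) ^ i / i ! * ((βU * b) ^ j / j !)) *
          (x ^ (s - i - j - 1) * exp (-(βW * a + βU * b) / x - βX * x)) := by
  rw [gammaPDFReal, if_pos hx.le, erlangTail, erlangTail, mul_sum, mul_sum, sum_mul_sum, mul_sum]
  refine sum_congr rfl fun i _ => ?_
  rw [mul_sum]
  refine sum_congr rfl fun j _ => ?_
  have hpow : x ^ (s - 1) = x ^ (s - i - j - 1) * x ^ i * x ^ j := by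
    rw [← rpow_natCast, ← rpow_natCast, ← rpow_add hx, ← rpow_add hx]
    ring_nf
  have hexp : exp (-(βW * a + βU * b) / x - βX * x) =
      exp (-(βX * x)) * exp (-(βW * (a / x))) * exp (-(βU * (b / x))) := by
    rw [← exp_add, ← exp_add]
    field_simp
    ring_nf
  rw [hpow, hexp, mul_div_assoc' βW, mul_div_assoc' βU, div_pow, div_pow]
  field_simp

lemma lintegral_gammaMeasure_Ioi_mul_gammaMeasure_Ioi {s βX : ℝ} (hs : 0 < s) (hβX : 0 < βX)
    {mW mU : ℕ} (hmW : 0 < mW) (hmU : 0 < mU) {βW βU : ℝ} (hβW : 0 < βW) (hβU : 0 < βU)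
    {a b : ℝ} (ha : 0 ≤ a) (hb : 0 ≤ b) :
    ∫⁻ x, gammaMeasure mW βW (Ioi (a / x)) * gammaMeasure mU βU (Ioi (b / x)) ∂gammaMeasure s βX =
      ∑ i ∈ range mW, ∑ j ∈ range mU, ∫⁻ y in Ioi 0, ENNReal.ofReal
        (βX ^ s / Gamma s * ((βW * a) ^ i / i ! * ((βU * b) ^ j / j !)) *
          (y ^ (s - i - j - 1) * exp (-(βW * a + βU * b) / y - βX * y))) := by
  have hpdf : Measurable (gammaPDF s βX) := (measurable_gammaPDFReal s βX).ennreal_ofReal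
  have htails : Measurable fun x =>
      ENNReal.ofReal (erlangTail mW βW (a / x) * erlangTail mU βU (b / x)) := by
    have := (continuous_erlangTail mW βW).measurable
    have := (continuous_erlangTail mU βU).measurable
    fun_prop
  calc _ = ∫⁻ x in Ioi 0, gammaMeasure mW βW (Ioi (a / x)) * gammaMeasure mU βU (Ioi (b / x))
        ∂gammaMeasure s βX := by
        rw [Measure.restrict_eq_self_of_ae_mem (s := Ioi 0) (ae_pos_gammaMeasure s βX)]
    _ = ∫⁻ x in Ioi 0, ENNReal.ofReal (erlangTail mW βW (a / x) * erlangTail mU βU (b / x))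
        ∂gammaMeasure s βX := by
        refine setLIntegral_congr_fun measurableSet_Ioi fun x (hx : 0 < x) => ?_
        rw [gammaMeasure_Ioi hmW hβW (by positivity), gammaMeasure_Ioi hmU hβU (by positivity),
          ENNReal.ofReal_mul (erlangTail_nonneg _ hβW.le (by positivity))]
    _ = ∫⁻ x in Ioi 0, gammaPDF s βX x *
        ENNReal.ofReal (erlangTail mW βW (a / x) * erlangTail mU βU (b / x)) :=
        setLIntegral_withDensity_eq_setLIntegral_mul volume hpdf htails measurableSet_Ioi
    _ = ∫⁻ x in Ioi 0, ∑ i ∈ range mW, ∑ j ∈ range mU, ENNReal.ofReal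
        (βX ^ s / Gamma s * ((βW * a) ^ i / i ! * ((βU * b) ^ j / j !)) *
          (x ^ (s - i - j - 1) * exp (-(βW * a + βU * b) / x - βX * x))) := by
        refine setLIntegral_congr_fun measurableSet_Ioi fun x (hx : 0 < x) => ?_
        rw [gammaPDF, ← ENNReal.ofReal_mul (gammaPDFReal_nonneg hs hβX x),
          gammaPDFReal_mul_erlangTail_mul_erlangTail s βX βW βU a b mW mU hx,
          ENNReal.ofReal_sum_of_nonneg fun i _ => sum_nonneg fun j _ => by positivity]
        exact sum_congr rfl fun i _ => ENNReal.ofReal_sum_of_nonneg fun j _ => by positivity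
    _ = _ := by
        rw [lintegral_finsetSum' _ fun i _ => by fun_prop]
        exact sum_congr rfl fun i _ => lintegral_finsetSum' _ fun j _ => by fun_prop

/-- Evaluation of the term `I_2` in Appendix A: for mutually independent
`X ~ Gamma(m_X, β_X)`, `W ~ Gamma(m_W, β_W)`, `U ~ Gamma(m_U, β_U)` and `a, b > 0`,
`P(X·W > a, X·U > b) = (β_X^{m_X}/Γ(m_X)) Σ_{i=0}^{m_W−1} Σ_{j=0}^{m_U−1}
  ((β_W a)^i/i!)((β_U b)^j/j!) ∫_0^∞ y^{m_X−i−j−1} exp(−(β_W a + β_U b)/y − β_X y) dy`. -/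
theorem gamma_joint_survival_probability
    {Ω : Type*} [MeasurableSpace Ω] (P : Measure Ω) [IsProbabilityMeasure P]
    (mX mW mU : ℕ) (hmX : 0 < mX) (hmW : 0 < mW) (hmU : 0 < mU)
    (βX βW βU : ℝ) (hβX : 0 < βX) (hβW : 0 < βW) (hβU : 0 < βU)
    (X W U : Ω → ℝ) (hX : Measurable X) (hW : Measurable W) (hU : Measurable U)
    (hXd : Measure.map X P = gammaMeasure mX βX)
    (hWd : Measure.map W P = gammaMeasure mW βW)
    (hUd : Measure.map U P = gammaMeasure mU βU)
    (hInd : iIndepFun ![X, W, U] P)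
    (a b : ℝ) (ha : 0 < a) (hb : 0 < b) :
    (P {ω | a < X ω * W ω ∧ b < X ω * U ω}).toReal =
      (βX ^ mX / Real.Gamma mX) *
        ∑ i ∈ Finset.range mW, ∑ j ∈ Finset.range mU,
          ((βW * a) ^ i / (Nat.factorial i)) * ((βU * b) ^ j / (Nat.factorial j)) *
            ∫ y in Set.Ioi (0 : ℝ),
              y ^ ((mX : ℝ) - i - j - 1) *
                Real.exp (-(βW * a + βU * b) / y - βX * y) := by
  have hXpos : ∀ᵐ x ∂P.map X, 0 < x := hXd ▸ ae_pos_gammaMeasure mX βX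
  have hP := measure_lt_mul_and_lt_mul_eq_lintegral hX hW hU hInd hXpos a b
  rw [hXd, hWd, hUd, lintegral_gammaMeasure_Ioi_mul_gammaMeasure_Ioi (by positivity) hβX hmW hmU
    hβW hβU ha.le hb.le] at hP
  have hfin := hP ▸ measure_ne_top P _
  rw [hP, ENNReal.toReal_sum fun i hi => ENNReal.sum_ne_top.1 hfin i hi, mul_sum]
  refine sum_congr rfl fun i hi => ?_
  rw [ENNReal.toReal_sum (ENNReal.sum_ne_top.1 (ENNReal.sum_ne_top.1 hfin i hi)), mul_sum]
  refine sum_congr rfl fun j _ => ?_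
  rw [← integral_eq_lintegral_of_nonneg_ae
      ((ae_restrict_iff' measurableSet_Ioi).2 (ae_of_all _ fun y (hy : 0 < y) => by positivity))
      (by fun_prop),
    integral_const_mul, rpow_natCast, mul_assoc]
end

section
/- (Proposition 2, exact integral form of the approximated HTC outage probability.) Let h_AS, h_SA, h_SR, h_AR, h_RA be mutually independent random variables, Gamma(m_AS, β_AS)-, Gamma(m_SA, β_SA)-, Gamma(m_SR, β_SR)-, Gamma(m_AR, β_AR)- and Gamma(m_RA, β_RA)-distributed respectively, with integer shapes and positive rates. For positive integers m1, m2, rates β1, β2 > 0 and c > 0, write T(m1, β1; m2, β2; c) := Σ_{i=0}^{m1−1} ((β1 c)^i / i!) · (β2^{m2}/Γ(m2)) · ∫_0^∞ y^{m2−i−1} exp(−β1 c/y − β2 y) dy, and for a, b > 0 write Φ(a, b) := (β_AS^{m_AS}/Γ(m_AS)) Σ_{i=0}^{m_SA−1} Σ_{j=0}^{m_SR−1} ((β_SA a)^i/i!)((β_SR b)^j/j!) ∫_0^∞ y^{m_AS−i−j−1} exp(−(β_SA a + β_SR b)/y − β_AS y) dy. Then for every a > 0: P( h_AS·h_SA <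 a and min(h_AS·h_SR, h_AR·h_RA) < a ) = 1 − T(m_AS, β_AS; m_SA, β_SA; a) − T(m_AR, β_AR; m_RA, β_RA; a) · [ T(m_SR, β_SR; m_AS, β_AS; a) − Φ(a, a) ]. -/
open MeasureTheory ProbabilityTheory Real

/-- `T(m1, β1; m2, β2; c) = Σ_{i=0}^{m1−1} ((β1 c)^i / i!) · (β2^{m2}/Γ(m2)) ·
  ∫_0^∞ y^{m2−i−1} exp(−β1 c/y − β2 y) dy` (the survival function `S` of Proposition 1,
written via its underlying integral). -/
noncomputable def Tfun (m1 : ℕ) (β1 : ℝ) (m2 : ℕ) (β2 : ℝ) (c : ℝ) : ℝ :=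
  ∑ i ∈ Finset.range m1,
    ((β1 * c) ^ i / (Nat.factorial i)) * (β2 ^ m2 / Real.Gamma m2) *
      ∫ y in Set.Ioi (0 : ℝ), y ^ ((m2 : ℝ) - i - 1) * Real.exp (-(β1 * c) / y - β2 * y)

/-- `Φ(a, b)` of Propositions 2 and 3, written via its underlying integral. -/
noncomputable def Phi (mAS : ℕ) (βAS : ℝ) (mSA : ℕ) (βSA : ℝ) (mSR : ℕ) (βSR : ℝ)
    (a b : ℝ) : ℝ :=
  (βAS ^ mAS / Real.Gamma mAS) *
    ∑ i ∈ Finset.range mSA, ∑ j ∈ Finset.range mSR,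
      ((βSA * a) ^ i / (Nat.factorial i)) * ((βSR * b) ^ j / (Nat.factorial j)) *
        ∫ y in Set.Ioi (0 : ℝ),
          y ^ ((mAS : ℝ) - i - j - 1) * Real.exp (-(βSA * a + βSR * b) / y - βAS * y)

open Set Filter Topology

/-!
For `X ~ Gamma(m, β)` with integer shape, `P(X ≥ t) = Σ_{i<m} e^{-βt} (βt)^i / i!` is a sum of
Poisson weights: its derivative telescopes to minus the Gamma density. Conditioning on the common
factor `Y`, the probabilities `P(XY ≥ c)` and `P(X₁Y ≥ c₁, X₂Y ≥ c₂)` become integrals of such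
Poisson sums against the density of `Y`, and expanding term by term gives `T` and `Φ`.
With `E = {h_AS h_SA < a}`, `F = {h_AS h_SR < a}`, `G = {h_AR h_RA < a}` the event is
`E ∩ (F ∪ G)`, and `E \ (F ∪ G) = (E ∩ Fᶜ) ∩ Gᶜ` splits into an event of `(h_AS, h_SA, h_SR)` and
one of `(h_AR, h_RA)`, so by independence
`P(E ∩ (F ∪ G)) = 1 - P(Eᶜ) - P(Gᶜ) (P(Fᶜ) - P(Eᶜ ∩ Fᶜ))`.
-/

noncomputable def poissonTerm (u : ℝ) (i : ℕ) : ℝ :=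
  exp (-u) * u ^ i / Nat.factorial i

lemma poissonTerm_nonneg {u : ℝ} (hu : 0 ≤ u) (i : ℕ) : 0 ≤ poissonTerm u i := by
  unfold poissonTerm; positivity

lemma poissonTerm_le_one {u : ℝ} (hu : 0 ≤ u) (i : ℕ) : poissonTerm u i ≤ 1 := by
  rw [poissonTerm, mul_div_assoc, exp_neg, inv_mul_le_iff₀ (exp_pos u), mul_one]
  exact Real.pow_div_factorial_le_exp u hu i

lemma norm_poissonTerm_le_one {u : ℝ} (hu : 0 ≤ u) (i : ℕ) : ‖poissonTerm u i‖ ≤ 1 := by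
  rw [Real.norm_of_nonneg (poissonTerm_nonneg hu i)]
  exact poissonTerm_le_one hu i

lemma poissonTerm_div (A y : ℝ) (i : ℕ) :
    poissonTerm (A / y) i = A ^ i / Nat.factorial i * (exp (-A / y) / y ^ i) := by
  rw [poissonTerm, div_pow, neg_div]
  ring

lemma continuous_poissonTerm (i : ℕ) : Continuous fun u => poissonTerm u i := by
  unfold poissonTerm; fun_prop

lemma measurable_poissonTerm_div (A : ℝ) (i : ℕ) : Measurable fun y => poissonTerm (A / y) i :=
  (continuous_poissonTerm i).measurable.comp (measurable_const.div measurable_id)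

lemma hasDerivAt_poissonTerm_succ (β x : ℝ) (i : ℕ) :
    HasDerivAt (fun x => poissonTerm (β * x) (i + 1))
      (β * (poissonTerm (β * x) i - poissonTerm (β * x) (i + 1))) x := by
  have hlin : HasDerivAt (fun x => β * x) β x := by simpa using (hasDerivAt_id x).const_mul β
  have hexp : HasDerivAt (fun x => exp (-(β * x))) (exp (-(β * x)) * -β) x := hlin.fun_neg.exp
  have hpow : HasDerivAt (fun x => (β * x) ^ (i + 1)) ((i + 1 : ℕ) * (β * x) ^ i * β) x := by
    simpa using hlin.fun_pow (i + 1)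
  have h := (hexp.fun_mul hpow).div_const (Nat.factorial (i + 1) : ℝ)
  refine h.congr_deriv ?_
  simp only [poissonTerm, Nat.factorial_succ, Nat.cast_mul]
  have : (Nat.factorial i : ℝ) ≠ 0 := by positivity
  field_simp
  push_cast
  ring

lemma hasDerivAt_sum_poissonTerm (β x : ℝ) (m : ℕ) :
    HasDerivAt (fun x => ∑ i ∈ Finset.range (m + 1), poissonTerm (β * x) i)
      (-(β * poissonTerm (β * x) m)) x := by
  induction m with
  | zero =>
    have hlin : HasDerivAt (fun x => β * x) β x := by simpa using (hasDerivAt_id x).const_mul β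
    simpa [poissonTerm, mul_comm] using hlin.neg.exp
  | succ m ih =>
    simp only [Finset.sum_range_succ _ (m + 1)]
    exact (ih.fun_add (hasDerivAt_poissonTerm_succ β x m)).congr_deriv (by ring)

lemma tendsto_sum_poissonTerm_atTop {β : ℝ} (hβ : 0 < β) (m : ℕ) :
    Tendsto (fun x => ∑ i ∈ Finset.range m, poissonTerm (β * x) i) atTop (𝓝 0) := by
  rw [← Finset.sum_const_zero (s := Finset.range m)]
  refine tendsto_finsetSum _ fun i _ => ?_
  have h := ((tendsto_pow_mul_exp_neg_atTop_nhds_zero i).comp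
    (tendsto_id.const_mul_atTop hβ)).div_const (Nat.factorial i : ℝ)
  simpa [poissonTerm, mul_comm] using h

lemma gammaPDFReal_natCast_succ_eq_mul_poissonTerm {β x : ℝ} (hx : 0 ≤ x) (m : ℕ) :
    gammaPDFReal (m + 1 : ℕ) β x = β * poissonTerm (β * x) m := by
  rw [gammaPDFReal, if_pos hx, poissonTerm, rpow_natCast, Nat.cast_succ, add_sub_cancel_right,
    rpow_natCast, Gamma_nat_eq_factorial, mul_pow]
  ring

lemma gammaPDFReal_mul_exp_div_pow {a r y : ℝ} (hy : 0 < y) (A : ℝ) (n : ℕ) :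
    gammaPDFReal a r y * (exp (-A / y) / y ^ n) =
      r ^ a / Gamma a * (y ^ (a - n - 1) * exp (-A / y - r * y)) := by
  have hpow : y ^ (a - n - 1) = y ^ (a - 1) / y ^ n := by
    rw [sub_right_comm, rpow_sub hy, rpow_natCast]
  rw [gammaPDFReal, if_pos hy.le, hpow, exp_sub, exp_neg (r * y)]
  field_simp

lemma integrable_gammaPDFReal {a r : ℝ} (ha : 0 < a) (hr : 0 < r) :
    Integrable (gammaPDFReal a r) := by
  refine ⟨(measurable_gammaPDFReal a r).aestronglyMeasurable, ?_⟩
  rw [hasFiniteIntegral_iff_ofReal (ae_of_all _ (gammaPDFReal_nonneg ha hr))]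
  change ∫⁻ x, gammaPDF a r x < ⊤
  rw [lintegral_gammaPDF_eq_one ha hr]
  exact ENNReal.one_lt_top

lemma integrableOn_gammaPDFReal_mul {a r : ℝ} (ha : 0 < a) (hr : 0 < r) {g : ℝ → ℝ}
    (hg : Measurable g) {C : ℝ} (hbound : ∀ y ∈ Ioi (0 : ℝ), ‖g y‖ ≤ C) :
    IntegrableOn (fun y => gammaPDFReal a r y * g y) (Ioi 0) :=
  (integrable_gammaPDFReal ha hr).integrableOn.mul_bdd hg.aestronglyMeasurable
    (ae_restrict_of_forall_mem measurableSet_Ioi hbound)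

lemma integral_gammaMeasure {a r : ℝ} (ha : 0 < a) (hr : 0 < r) (f : ℝ → ℝ) :
    ∫ x, f x ∂gammaMeasure a r = ∫ x in Ioi 0, gammaPDFReal a r x * f x := by
  rw [gammaMeasure, integral_withDensity_eq_integral_toReal_smul
    (show Measurable (gammaPDF a r) from (measurable_gammaPDFReal a r).ennreal_ofReal)
    (ae_of_all _ fun _ => ENNReal.ofReal_lt_top),
    ← integral_Ici_eq_integral_Ioi, ← setIntegral_eq_integral_of_forall_compl_eq_zero]
  · refine setIntegral_congr_fun measurableSet_Ici fun x _ => ?_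
    rw [gammaPDF, ENNReal.toReal_ofReal (gammaPDFReal_nonneg ha hr x), smul_eq_mul]
  · intro x hx
    simp [gammaPDF, gammaPDFReal, if_neg (show ¬0 ≤ x from hx)]

lemma ae_gammaMeasure_pos (a r : ℝ) : ∀ᵐ x ∂gammaMeasure a r, 0 < x := by
  rw [ae_iff]
  simp only [not_lt]
  change gammaMeasure a r (Iic 0) = 0
  rw [gammaMeasure, withDensity_apply _ measurableSet_Iic,
    setLIntegral_congr (Iio_ae_eq_Iic (a := (0 : ℝ))).symm]
  exact lintegral_gammaPDF_of_nonpos le_rfl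

lemma gammaMeasure_real_Ici {m : ℕ} (hm : 0 < m) {β : ℝ} (hβ : 0 < β) {t : ℝ} (ht : 0 ≤ t) :
    (gammaMeasure m β).real (Ici t) = ∑ i ∈ Finset.range m, poissonTerm (β * t) i := by
  obtain ⟨n, rfl⟩ := Nat.exists_eq_add_one_of_ne_zero hm.ne'
  have hpdf : (gammaMeasure (n + 1 : ℕ) β).real (Ici t) =
      ∫ x in Ioi t, β * poissonTerm (β * x) n := by
    rw [measureReal_def, gammaMeasure, withDensity_apply _ measurableSet_Ici]
    change (∫⁻ x in Ici t, ENNReal.ofReal (gammaPDFReal (n + 1 : ℕ) β x)).toReal = _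
    rw [← integral_eq_lintegral_of_nonneg_ae (ae_of_all _ (gammaPDFReal_nonneg (by positivity) hβ))
        (measurable_gammaPDFReal _ β).aestronglyMeasurable, integral_Ici_eq_integral_Ioi]
    exact setIntegral_congr_fun measurableSet_Ioi fun x hx =>
      gammaPDFReal_natCast_succ_eq_mul_poissonTerm (ht.trans hx.le) n
  have hderiv (x : ℝ) : HasDerivAt (fun x => -∑ i ∈ Finset.range (n + 1), poissonTerm (β * x) i)
      (β * poissonTerm (β * x) n) x := by
    simpa using (hasDerivAt_sum_poissonTerm β x n).fun_neg
  rw [hpdf, integral_Ioi_of_hasDerivAt_of_nonneg' (fun x _ => hderiv x)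
    (fun x hx => mul_nonneg hβ.le (poissonTerm_nonneg (mul_nonneg hβ.le (ht.trans hx.out.le)) n))
    (by simpa using (tendsto_sum_poissonTerm_atTop hβ (n + 1)).neg)]
  ring

lemma gammaMeasure_real_setOf_le_mul {m : ℕ} (hm : 0 < m) {β c y : ℝ} (hβ : 0 < β) (hc : 0 ≤ c)
    (hy : 0 < y) :
    (gammaMeasure m β).real {x | c ≤ x * y} = ∑ i ∈ Finset.range m, poissonTerm (β * c / y) i := by
  have hset : {x : ℝ | c ≤ x * y} = Ici (c / y) := by
    ext x
    simp [div_le_iff₀ hy]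
  rw [hset, gammaMeasure_real_Ici hm hβ (div_nonneg hc hy.le), mul_div_assoc]

lemma setIntegral_gammaPDFReal_mul_exp_div_pow (a r A : ℝ) (n : ℕ) :
    ∫ y in Ioi 0, gammaPDFReal a r y * (exp (-A / y) / y ^ n) =
      r ^ a / Gamma a * ∫ y in Ioi 0, y ^ (a - n - 1) * exp (-A / y - r * y) := by
  rw [← integral_const_mul]
  exact setIntegral_congr_fun measurableSet_Ioi fun y hy => gammaPDFReal_mul_exp_div_pow hy A n

lemma integral_sum_poissonTerm_gammaMeasure_eq_Tfun (m1 : ℕ) {m2 : ℕ} (hm2 : 0 < m2) {β1 β2 c : ℝ}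
    (hβ1 : 0 ≤ β1) (hβ2 : 0 < β2) (hc : 0 ≤ c) :
    ∫ y, ∑ i ∈ Finset.range m1, poissonTerm (β1 * c / y) i ∂gammaMeasure m2 β2 =
      Tfun m1 β1 m2 β2 c := by
  have hm2' : (0 : ℝ) < m2 := by exact_mod_cast hm2
  have hA : 0 ≤ β1 * c := mul_nonneg hβ1 hc
  rw [integral_gammaMeasure hm2' hβ2]
  simp_rw [Finset.mul_sum]
  rw [integral_finsetSum _ fun i _ => integrableOn_gammaPDFReal_mul hm2' hβ2
    (measurable_poissonTerm_div _ i) fun y hy =>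
      norm_poissonTerm_le_one (div_nonneg hA (le_of_lt hy)) i]
  refine Finset.sum_congr rfl fun i _ => ?_
  simp_rw [poissonTerm_div, mul_left_comm (gammaPDFReal _ _ _)]
  rw [integral_const_mul, setIntegral_gammaPDFReal_mul_exp_div_pow, rpow_natCast]
  ring

lemma integral_sum_mul_sum_poissonTerm_gammaMeasure_eq_Phi {m : ℕ} (hm : 0 < m) (m1 m2 : ℕ)
    {β β1 β2 c1 c2 : ℝ} (hβ : 0 < β) (hβ1 : 0 ≤ β1) (hβ2 : 0 ≤ β2) (hc1 : 0 ≤ c1)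
    (hc2 : 0 ≤ c2) :
    ∫ y, (∑ i ∈ Finset.range m1, poissonTerm (β1 * c1 / y) i) *
        (∑ j ∈ Finset.range m2, poissonTerm (β2 * c2 / y) j) ∂gammaMeasure m β =
      Phi m β m1 β1 m2 β2 c1 c2 := by
  have hm' : (0 : ℝ) < m := by exact_mod_cast hm
  have hA : 0 ≤ β1 * c1 := mul_nonneg hβ1 hc1
  have hB : 0 ≤ β2 * c2 := mul_nonneg hβ2 hc2
  have hint (i j : ℕ) : IntegrableOn (fun y => gammaPDFReal m β y *
      (poissonTerm (β1 * c1 / y) i * poissonTerm (β2 * c2 / y) j)) (Ioi 0) := by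
    refine integrableOn_gammaPDFReal_mul hm' hβ ((measurable_poissonTerm_div _ i).mul
      (measurable_poissonTerm_div _ j)) (C := 1 * 1) fun y hy => ?_
    rw [norm_mul]
    have hy : 0 < y := hy
    exact mul_le_mul (norm_poissonTerm_le_one (by positivity) i)
      (norm_poissonTerm_le_one (by positivity) j) (norm_nonneg _) zero_le_one
  rw [integral_gammaMeasure hm' hβ, Phi]
  simp_rw [Finset.sum_mul_sum, Finset.mul_sum]
  rw [integral_finsetSum _ fun i _ => integrable_finsetSum _ fun j _ => hint i j]
  refine Finset.sum_congr rfl fun i _ => ?_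
  rw [integral_finsetSum _ fun j _ => hint i j]
  refine Finset.sum_congr rfl fun j _ => ?_
  have hterm (y : ℝ) : poissonTerm (β1 * c1 / y) i * poissonTerm (β2 * c2 / y) j =
      (β1 * c1) ^ i / Nat.factorial i * ((β2 * c2) ^ j / Nat.factorial j) *
        (exp (-(β1 * c1 + β2 * c2) / y) / y ^ (i + j)) := by
    rw [poissonTerm_div, poissonTerm_div, pow_add, neg_add, add_div, exp_add]
    ring
  simp_rw [hterm, mul_left_comm (gammaPDFReal _ _ _)]
  rw [integral_const_mul, setIntegral_gammaPDFReal_mul_exp_div_pow, Nat.cast_add,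
    ← sub_sub, rpow_natCast]
  ring

lemma measureReal_prod_eq_integral {α β : Type*} [MeasurableSpace α] [MeasurableSpace β]
    {μ : Measure α} {ν : Measure β} [IsFiniteMeasure ν] {s : Set (α × β)}
    (hs : MeasurableSet s) : (μ.prod ν).real s = ∫ x, ν.real (Prod.mk x ⁻¹' s) ∂μ := by
  rw [measureReal_def, Measure.prod_apply hs]
  exact (integral_toReal (measurable_measure_prodMk_left hs).aemeasurable
    (ae_of_all _ fun _ => measure_lt_top _ _)).symm

lemma gammaMeasure_prod_real_le_mul_eq_Tfun {m1 m2 : ℕ} (hm1 : 0 < m1) (hm2 : 0 < m2) {β1 β2 c : ℝ}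
    (hβ1 : 0 < β1) (hβ2 : 0 < β2) (hc : 0 ≤ c) :
    ((gammaMeasure m2 β2).prod (gammaMeasure m1 β1)).real {p | c ≤ p.2 * p.1} =
      Tfun m1 β1 m2 β2 c := by
  have := isProbabilityMeasure_gammaMeasure (Nat.cast_pos.mpr hm1) hβ1
  have := isProbabilityMeasure_gammaMeasure (Nat.cast_pos.mpr hm2) hβ2
  rw [measureReal_prod_eq_integral (measurableSet_le measurable_const (by fun_prop)),
    ← integral_sum_poissonTerm_gammaMeasure_eq_Tfun m1 hm2 hβ1.le hβ2 hc]
  refine integral_congr_ae ?_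
  filter_upwards [ae_gammaMeasure_pos _ _] with y hy
  exact gammaMeasure_real_setOf_le_mul hm1 hβ1 hc hy

lemma gammaMeasure_prod_real_le_mul_and_le_mul_eq_Phi {m m1 m2 : ℕ} (hm : 0 < m) (hm1 : 0 < m1)
    (hm2 : 0 < m2) {β β1 β2 c1 c2 : ℝ} (hβ : 0 < β) (hβ1 : 0 < β1) (hβ2 : 0 < β2) (hc1 : 0 ≤ c1)
    (hc2 : 0 ≤ c2) :
    ((gammaMeasure m β).prod ((gammaMeasure m1 β1).prod (gammaMeasure m2 β2))).real
        {p | c1 ≤ p.2.1 * p.1 ∧ c2 ≤ p.2.2 * p.1} =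
      Phi m β m1 β1 m2 β2 c1 c2 := by
  have := isProbabilityMeasure_gammaMeasure (Nat.cast_pos.mpr hm) hβ
  have := isProbabilityMeasure_gammaMeasure (Nat.cast_pos.mpr hm1) hβ1
  have := isProbabilityMeasure_gammaMeasure (Nat.cast_pos.mpr hm2) hβ2
  rw [measureReal_prod_eq_integral (by measurability),
    ← integral_sum_mul_sum_poissonTerm_gammaMeasure_eq_Phi hm m1 m2 hβ hβ1.le hβ2.le hc1 hc2]
  refine integral_congr_ae ?_
  filter_upwards [ae_gammaMeasure_pos _ _] with y hy
  have hslice : Prod.mk y ⁻¹' {p : ℝ × ℝ × ℝ | c1 ≤ p.2.1 * p.1 ∧ c2 ≤ p.2.2 * p.1} =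
      {x | c1 ≤ x * y} ×ˢ {x | c2 ≤ x * y} := rfl
  rw [hslice, measureReal_prod_prod, gammaMeasure_real_setOf_le_mul hm1 hβ1 hc1 hy,
    gammaMeasure_real_setOf_le_mul hm2 hβ2 hc2 hy]

section RandomVariables

variable {Ω : Type*} [MeasurableSpace Ω] {P : Measure Ω}

lemma measureReal_le_mul_eq_Tfun [IsFiniteMeasure P] {X Y : Ω → ℝ} (hX : Measurable X)
    (hY : Measurable Y) (hXY : IndepFun X Y P) {m1 m2 : ℕ} (hm1 : 0 < m1) (hm2 : 0 < m2)
    {β1 β2 : ℝ} (hβ1 : 0 < β1) (hβ2 : 0 < β2) (hlawX : P.map X = gammaMeasure m1 β1)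
    (hlawY : P.map Y = gammaMeasure m2 β2) {c : ℝ} (hc : 0 ≤ c) :
    P.real {ω | c ≤ X ω * Y ω} = Tfun m1 β1 m2 β2 c := by
  rw [← gammaMeasure_prod_real_le_mul_eq_Tfun hm1 hm2 hβ1 hβ2 hc, ← hlawX, ← hlawY,
    ← hXY.symm.map_prod_eq_prod_map_map hY.aemeasurable hX.aemeasurable,
    map_measureReal_apply (hY.prodMk hX) (measurableSet_le measurable_const (by fun_prop))]
  rfl

lemma measureReal_le_mul_and_le_mul_eq_Phi [IsFiniteMeasure P] {Y X1 X2 : Ω → ℝ}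
    (hY : Measurable Y) (hX1 : Measurable X1) (hX2 : Measurable X2)
    (hYX : IndepFun Y (fun ω => (X1 ω, X2 ω)) P) (hX12 : IndepFun X1 X2 P) {m m1 m2 : ℕ}
    (hm : 0 < m) (hm1 : 0 < m1) (hm2 : 0 < m2) {β β1 β2 : ℝ} (hβ : 0 < β) (hβ1 : 0 < β1)
    (hβ2 : 0 < β2) (hlawY : P.map Y = gammaMeasure m β) (hlawX1 : P.map X1 = gammaMeasure m1 β1)
    (hlawX2 : P.map X2 = gammaMeasure m2 β2) {c1 c2 : ℝ} (hc1 : 0 ≤ c1) (hc2 : 0 ≤ c2) :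
    P.real {ω | c1 ≤ Y ω * X1 ω ∧ c2 ≤ Y ω * X2 ω} = Phi m β m1 β1 m2 β2 c1 c2 := by
  rw [← gammaMeasure_prod_real_le_mul_and_le_mul_eq_Phi hm hm1 hm2 hβ hβ1 hβ2 hc1 hc2, ← hlawY,
    ← hlawX1, ← hlawX2, ← hX12.map_prod_eq_prod_map_map hX1.aemeasurable hX2.aemeasurable,
    ← hYX.map_prod_eq_prod_map_map hY.aemeasurable (hX1.prodMk hX2).aemeasurable,
    map_measureReal_apply (hY.prodMk (hX1.prodMk hX2)) (by measurability)]
  congr 1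
  ext ω
  simp only [mem_preimage, mem_ofPred_eq, mul_comm]

lemma ProbabilityTheory.iIndepFun.indepFun_prodMk₃_prodMk {ι β : Type*} [DecidableEq ι]
    [MeasurableSpace β] {f : ι → Ω → β} (hf : iIndepFun f P) (hmeas : ∀ i, Measurable (f i))
    (i j k l n : ι) (hdisj : Disjoint ({i, j, k} : Finset ι) {l, n}) :
    IndepFun (fun ω => (f i ω, f j ω, f k ω)) (fun ω => (f l ω, f n ω)) P :=
  (hf.indepFun_finset _ _ hdisj hmeas).comp
    (φ := fun v => (v ⟨i, by simp⟩, v ⟨j, by simp⟩, v ⟨k, by simp⟩))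
    (ψ := fun v => (v ⟨l, by simp⟩, v ⟨n, by simp⟩))
    ((measurable_pi_apply _).prodMk ((measurable_pi_apply _).prodMk (measurable_pi_apply _)))
    ((measurable_pi_apply _).prodMk (measurable_pi_apply _))

lemma measureReal_inter_union_eq [IsProbabilityMeasure P] {E F G : Set Ω}
    (hE : MeasurableSet E) (hF : MeasurableSet F) (hG : MeasurableSet G)
    (hindep : P (E ∩ Fᶜ ∩ Gᶜ) = P (E ∩ Fᶜ) * P Gᶜ) :
    P.real (E ∩ (F ∪ G)) = 1 - P.real Eᶜ - P.real Gᶜ * (P.real Fᶜ - P.real (Eᶜ ∩ Fᶜ)) := by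
  have hsplit := measureReal_inter_add_sdiff (s := E) (μ := P) (hF.union hG)
  have hsplitF := measureReal_inter_add_sdiff (s := Fᶜ) (μ := P) hE
  have hindep' : P.real (E ∩ Fᶜ ∩ Gᶜ) = P.real (E ∩ Fᶜ) * P.real Gᶜ := by
    simp only [measureReal_def, hindep, ENNReal.toReal_mul]
  rw [sdiff_eq, compl_union, ← inter_assoc] at hsplit
  rw [sdiff_eq, inter_comm Fᶜ E, inter_comm Fᶜ Eᶜ] at hsplitF
  rw [probReal_compl_eq_one_sub hE]
  linear_combination hsplit - hindep' - P.real Gᶜ * hsplitF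

end RandomVariables

/-- Proposition 2 (exact integral form of the approximated HTC outage probability):
for mutually independent Gamma-distributed channel gains and every `a > 0`,
`P(h_AS h_SA < a, min(h_AS h_SR, h_AR h_RA) < a)
  = 1 − T(m_AS, β_AS; m_SA, β_SA; a) − T(m_AR, β_AR; m_RA, β_RA; a) ·
    [T(m_SR, β_SR; m_AS, β_AS; a) − Φ(a, a)]`. -/
theorem htc_outage_probability
    {Ω : Type*} [MeasurableSpace Ω] (P : Measure Ω) [IsProbabilityMeasure P]
    (mAS mSA mSR mAR mRA : ℕ)
    (hmAS : 0 < mAS) (hmSA : 0 < mSA) (hmSR : 0 < mSR) (hmAR : 0 < mAR) (hmRA : 0 < mRA)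
    (βAS βSA βSR βAR βRA : ℝ)
    (hβAS : 0 < βAS) (hβSA : 0 < βSA) (hβSR : 0 < βSR) (hβAR : 0 < βAR) (hβRA : 0 < βRA)
    (hAS hSA hSR hAR hRA : Ω → ℝ)
    (hmeasAS : Measurable hAS) (hmeasSA : Measurable hSA) (hmeasSR : Measurable hSR)
    (hmeasAR : Measurable hAR) (hmeasRA : Measurable hRA)
    (hdAS : Measure.map hAS P = gammaMeasure mAS βAS)
    (hdSA : Measure.map hSA P = gammaMeasure mSA βSA)
    (hdSR : Measure.map hSR P = gammaMeasure mSR βSR)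
    (hdAR : Measure.map hAR P = gammaMeasure mAR βAR)
    (hdRA : Measure.map hRA P = gammaMeasure mRA βRA)
    (hInd : iIndepFun ![hAS, hSA, hSR, hAR, hRA] P)
    (a : ℝ) (ha : 0 < a) :
    (P {ω | hAS ω * hSA ω < a ∧ min (hAS ω * hSR ω) (hAR ω * hRA ω) < a}).toReal =
      1 - Tfun mAS βAS mSA βSA a -
        Tfun mAR βAR mRA βRA a *
          (Tfun mSR βSR mAS βAS a - Phi mAS βAS mSA βSA mSR βSR a a) := by
  have hmeas : ∀ i, Measurable (![hAS, hSA, hSR, hAR, hRA] i) := by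
    intro i; fin_cases i <;> assumption
  have hblock : IndepFun (fun ω => (hAS ω, hSA ω, hSR ω)) (fun ω => (hAR ω, hRA ω)) P :=
    hInd.indepFun_prodMk₃_prodMk hmeas 0 1 2 3 4 (by decide)
  have hASpair : IndepFun hAS (fun ω => (hSA ω, hSR ω)) P :=
    (hInd.indepFun_prodMk hmeas 1 2 0 (by decide) (by decide)).symm
  set E := {ω | hAS ω * hSA ω < a}
  set F := {ω | hAS ω * hSR ω < a}
  set G := {ω | hAR ω * hRA ω < a}
  have hset : {ω | hAS ω * hSA ω < a ∧ min (hAS ω * hSR ω) (hAR ω * hRA ω) < a} = E ∩ (F ∪ G) := by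
    ext ω; simp [E, F, G]
  have hfactor : P (E ∩ Fᶜ ∩ Gᶜ) = P (E ∩ Fᶜ) * P Gᶜ :=
    hblock.measure_inter_preimage_eq_mul {p | p.1 * p.2.1 < a ∧ ¬p.1 * p.2.2 < a}
      {p | ¬p.1 * p.2 < a} (by measurability) (by measurability)
  rw [← measureReal_def, hset, measureReal_inter_union_eq (by measurability) (by measurability)
    (by measurability) hfactor]
  simp only [E, F, G, compl_ofPred, not_lt, ← ofPred_and]
  rw [measureReal_le_mul_and_le_mul_eq_Phi hmeasAS hmeasSA hmeasSR hASpair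
      (hInd.indepFun (i := 1) (j := 2) (by decide)) hmAS hmSA hmSR hβAS hβSA hβSR hdAS hdSA hdSR
      ha.le ha.le,
    measureReal_le_mul_eq_Tfun hmeasAS hmeasSA (hInd.indepFun (i := 0) (j := 1) (by decide))
      hmAS hmSA hβAS hβSA hdAS hdSA ha.le,
    measureReal_le_mul_eq_Tfun hmeasAR hmeasRA (hInd.indepFun (i := 3) (j := 4) (by decide))
      hmAR hmRA hβAR hβRA hdAR hdRA ha.le]
  simp only [mul_comm (hAS _) (hSR _)]
  rw [measureReal_le_mul_eq_Tfun hmeasSR hmeasAS (hInd.indepFun (i := 2) (j := 0) (by decide))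
      hmSR hmAS hβSR hβAS hdSR hdAS ha.le]
end
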